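/- arXiv:1902.07500 — 3 statements merged into one kernel-verified Lean document; each statement's English description precedes it below -/
import Mathlib

section
/- Let V be a d×d real positive definite matrix, n a natural number, and for each t ∈ [n] let X_t be a d×m_t real matrix. Define V_0 = V and V_t = V_{t-1} + X_t X_tᵀ. Then det(V_n) ≥ det(V) · ∏_{t=1}^n (1 + tr(X_tᵀ V_{t-1}⁻¹ X_t)). -/
/-!
By the matrix determinant lemma, `det (W + X Xᵀ) = det W * det (1 + Xᵀ W⁻¹ X)`, and
`Xᵀ W⁻¹ X` is positive semidefinite when `W` is positive definite. For a positive semidefinite `B`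
with eigenvalues `λᵢ ≥ 0` we have `det (1 + B) = ∏ (1 + λᵢ) ≥ 1 + ∑ λᵢ = 1 + tr B`, which gives
`det W_{t+1} ≥ det W_t * (1 + tr (X_tᵀ W_t⁻¹ X_t))`; the theorem follows by induction on `n`.
-/

open Matrix Finset

theorem Finset.one_add_sum_le_prod_one_add {ι R : Type*} [CommSemiring R] [PartialOrder R]
    [IsOrderedRing R] (s : Finset ι) {f : ι → R} (hf : ∀ i ∈ s, 0 ≤ f i) :
    1 + ∑ i ∈ s, f i ≤ ∏ i ∈ s, (1 + f i) := by
  induction s using Finset.cons_induction with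
  | empty => simp
  | cons a s ha ih =>
    rw [sum_cons, prod_cons]
    obtain ⟨hfa, hfs⟩ := (forall_mem_cons ha _).mp hf
    calc 1 + (f a + ∑ i ∈ s, f i)
        ≤ 1 + (f a + ∑ i ∈ s, f i) + f a * ∑ i ∈ s, f i :=
          le_add_of_nonneg_right (mul_nonneg hfa (sum_nonneg hfs))
      _ = (1 + f a) * (1 + ∑ i ∈ s, f i) := by ring
      _ ≤ (1 + f a) * ∏ i ∈ s, (1 + f i) :=
          mul_le_mul_of_nonneg_left (ih hfs) (add_nonneg zero_le_one hfa)

namespace Matrix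

variable {m n : Type*} [Fintype m] [Fintype n]

theorem PosDef.add_mul_transpose {W : Matrix n n ℝ} (hW : W.PosDef) (X : Matrix n m ℝ) :
    (W + X * Xᵀ).PosDef := by
  simpa only [conjTranspose_eq_transpose_of_trivial] using
    hW.add_posSemidef (posSemidef_self_mul_conjTranspose X)

variable [DecidableEq n]

theorem IsHermitian.det_one_add {𝕜 : Type*} [RCLike 𝕜] {A : Matrix n n 𝕜}
    (hA : A.IsHermitian) : (1 + A).det = ∏ i, (1 + (hA.eigenvalues i : 𝕜)) := by
  set U := hA.eigenvectorUnitary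
  have hdiag :
      1 + A = U * diagonal (fun i ↦ 1 + (hA.eigenvalues i : 𝕜)) * star (U : Matrix n n 𝕜) := by
    conv_lhs => rw [hA.spectral_theorem]
    rw [← map_one (Unitary.conjStarAlgAut 𝕜 _ U), ← map_add, Unitary.conjStarAlgAut_apply,
      ← diagonal_one, diagonal_add]
    rfl
  rw [hdiag, det_mul_comm, ← mul_assoc, Unitary.star_mul_self_of_mem U.2, one_mul, det_diagonal]

theorem PosSemidef.one_add_trace_le_det_one_add {A : Matrix n n ℝ} (hA : A.PosSemidef) :
    1 + A.trace ≤ (1 + A).det := by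
  rw [hA.isHermitian.det_one_add, hA.isHermitian.trace_eq_sum_eigenvalues]
  exact one_add_sum_le_prod_one_add univ fun i _ ↦ hA.eigenvalues_nonneg i

theorem PosDef.posSemidef_transpose_mul_inv_mul {W : Matrix n n ℝ} (hW : W.PosDef)
    (X : Matrix n m ℝ) : (Xᵀ * W⁻¹ * X).PosSemidef := by
  simpa only [conjTranspose_eq_transpose_of_trivial] using
    hW.inv.posSemidef.conjTranspose_mul_mul_same X

theorem PosDef.det_mul_one_add_trace_le_det_add_mul_transpose [DecidableEq m] {W : Matrix n n ℝ}
    (hW : W.PosDef) (X : Matrix n m ℝ) :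
    W.det * (1 + (Xᵀ * W⁻¹ * X).trace) ≤ (W + X * Xᵀ).det := by
  rw [det_add_mul X Xᵀ hW.det_pos.ne'.isUnit]
  exact mul_le_mul_of_nonneg_left
    (hW.posSemidef_transpose_mul_inv_mul X).one_add_trace_le_det_one_add hW.det_pos.le

end Matrix

theorem stmt0 (d n : ℕ) (V : Matrix (Fin d) (Fin d) ℝ) (hV : V.PosDef)
    (m : ℕ → ℕ) (X : (t : ℕ) → Matrix (Fin d) (Fin (m t)) ℝ)
    (W : ℕ → Matrix (Fin d) (Fin d) ℝ)
    (hW0 : W 0 = V)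
    (hW : ∀ t, W (t + 1) = W t + X t * (X t)ᵀ) :
    (W n).det ≥ V.det * ∏ t ∈ Finset.range n, (1 + ((X t)ᵀ * (W t)⁻¹ * X t).trace) := by
  have hWpd : ∀ t, (W t).PosDef := by
    intro t
    induction t with
    | zero => rwa [hW0]
    | succ t ih => rw [hW t]; exact ih.add_mul_transpose (X t)
  induction n with
  | zero => simp [hW0]
  | succ n ih =>
    have htrace : 0 ≤ 1 + ((X n)ᵀ * (W n)⁻¹ * X n).trace :=
      add_nonneg zero_le_one ((hWpd n).posSemidef_transpose_mul_inv_mul (X n)).trace_nonneg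
    calc V.det * ∏ t ∈ range (n + 1), (1 + ((X t)ᵀ * (W t)⁻¹ * X t).trace)
        ≤ (W n).det * (1 + ((X n)ᵀ * (W n)⁻¹ * X n).trace) := by
          rw [prod_range_succ, ← mul_assoc]
          exact mul_le_mul_of_nonneg_right ih htrace
      _ ≤ (W (n + 1)).det := by
          rw [hW n]
          exact (hWpd n).det_mul_one_add_trace_le_det_add_mul_transpose (X n)
end

section
/- Let V be a d×d real positive definite matrix and X a d×m real matrix. Then det(V + X Xᵀ) ≥ det(V) · (1 + tr(Xᵀ V⁻¹ X)). -/
open Matrix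

lemma prod_one_add_ge {m : ℕ} (f : Fin m → ℝ) (hf : ∀ i, 0 ≤ f i) :
    1 + ∑ i, f i ≤ ∏ i, (1 + f i) := by
  induction m with
  | zero => simp
  | succ n ih =>
    rw [Fin.sum_univ_succ, Fin.prod_univ_succ]
    have h1 := ih (fun i => f i.succ) (fun i => hf _)
    have h2 : 0 ≤ ∑ i : Fin n, f i.succ := Finset.sum_nonneg fun i _ => hf _
    nlinarith [hf 0]

lemma det_one_add_ge {m : ℕ} (M : Matrix (Fin m) (Fin m) ℝ) (hM : M.PosSemidef) :
    1 + M.trace ≤ (1 + M).det := by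
  have h := hM.isHermitian
  obtain ⟨U, ev, hev, hU, hU', hspec⟩ : ∃ (U : Matrix (Fin m) (Fin m) ℝ) (ev : Fin m → ℝ),
      (∀ i, 0 ≤ ev i) ∧ U * star U = 1 ∧ star U * U = 1 ∧
      M = U * diagonal ev * star U :=
    ⟨h.eigenvectorUnitary, h.eigenvalues, fun i => hM.eigenvalues_nonneg i,
      (Matrix.mem_unitaryGroup_iff).mp h.eigenvectorUnitary.2,
      (Matrix.mem_unitaryGroup_iff').mp h.eigenvectorUnitary.2,
      by simpa [Function.comp] using h.spectral_theorem⟩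
  have key : (1 : Matrix (Fin m) (Fin m) ℝ) + M = U * (1 + diagonal ev) * star U := by
    rw [Matrix.mul_add, Matrix.add_mul, Matrix.mul_one, hU, hspec]
  have hdet : (1 + M).det = ∏ i, (1 + ev i) := by
    rw [key, det_mul, det_mul, mul_comm, ← mul_assoc, ← det_mul, hU', det_one, one_mul,
      ← Matrix.diagonal_one, Matrix.diagonal_add, det_diagonal]
  have htr : M.trace = ∑ i, ev i := by
    rw [hspec, trace_mul_cycle, hU', one_mul, trace_diagonal]
  rw [hdet, htr]
  exact prod_one_add_ge _ hev

theorem stmt3 (d m : ℕ) (V : Matrix (Fin d) (Fin d) ℝ) (hV : V.PosDef)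
    (X : Matrix (Fin d) (Fin m) ℝ) :
    (V + X * Xᵀ).det ≥ V.det * (1 + (Xᵀ * V⁻¹ * X).trace) := by
  have hVinv : V⁻¹.PosDef := hV.inv
  have hVunit : IsUnit V.det := isUnit_iff_ne_zero.mpr (ne_of_gt hV.det_pos)
  have hfact : V + X * Xᵀ = V * (1 + V⁻¹ * (X * Xᵀ)) := by
    rw [Matrix.mul_add, Matrix.mul_one, ← Matrix.mul_assoc,
      Matrix.mul_nonsing_inv V hVunit, one_mul]
  have hPSD : (Xᵀ * V⁻¹ * X).PosSemidef := by
    have := hVinv.posSemidef.conjTranspose_mul_mul_same X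
    simpa using this
  have h1 : 1 + (Xᵀ * V⁻¹ * X).trace ≤ (1 + Xᵀ * V⁻¹ * X).det := det_one_add_ge _ hPSD
  have h2 : (V + X * Xᵀ).det = V.det * (1 + Xᵀ * V⁻¹ * X).det := by
    rw [hfact, det_mul, show V⁻¹ * (X * Xᵀ) = (V⁻¹ * X) * Xᵀ from (Matrix.mul_assoc _ _ _).symm,
      det_one_add_mul_comm, ← Matrix.mul_assoc]
  rw [ge_iff_le, h2]
  exact mul_le_mul_of_nonneg_left h1 hV.det_pos.le
end

section
/- The following claimed identity is false: there exist a 2×2 positive definite matrix V and vectors x(1), x(2), x(3) ∈ ℝ² such that det(V + Σ_{i=1}^3 x(i)x(i)ᵀ) ≠ det(V)·(1 + Σ_{i=1}^3 x(i)ᵀ V⁻¹ x(i)). Concretely, with V = 1.2·I₂, x(1) = (0.3, 0.7), x(2) = (0.6, 0.1), x(3) = (0.1, 0.5), the left side equals 3.1346 while the right side equals 2.892. -/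
/-!
For `V = c • 1` in dimension two, `det (c • 1 + A) = c² + c · tr A + det A`, while
`det V · (1 + ∑ xᵢᵀ V⁻¹ xᵢ) = c² + c · tr A` with `A = ∑ xᵢ xᵢᵀ`. The two sides therefore differ by
`det A`, which is nonzero as soon as the `xᵢ` span `ℝ²`; for the given data `det A = 0.2426`.
-/

open Matrix

namespace Matrix

variable {R : Type*} [CommRing R]

theorem det_smul_one_add_fin_two (c : R) (A : Matrix (Fin 2) (Fin 2) R) :
    (c • 1 + A).det = c ^ 2 + c * A.trace + A.det := by
  simp only [det_fin_two, trace_fin_two, add_apply, smul_apply, one_apply_eq,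
    one_apply_ne Fin.zero_ne_one, one_apply_ne (one_ne_zero : (1 : Fin 2) ≠ 0), smul_eq_mul]
  ring

variable {K : Type*} [Field K] {n ι : Type*} [Fintype n] [DecidableEq n] [Fintype ι]

theorem inv_smul_one {c : K} (hc : c ≠ 0) : (c • 1 : Matrix n n K)⁻¹ = c⁻¹ • 1 :=
  inv_eq_right_inv (by rw [smul_mul_smul_comm, one_mul, mul_inv_cancel₀ hc, one_smul])

theorem sum_dotProduct_inv_smul_one_mulVec {c : K} (hc : c ≠ 0) (x : ι → n → K) :
    ∑ i, x i ⬝ᵥ (c • 1 : Matrix n n K)⁻¹ *ᵥ x i = c⁻¹ * (∑ i, vecMulVec (x i) (x i)).trace := by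
  simp [inv_smul_one hc, trace_sum, Finset.mul_sum, smul_mulVec, dotProduct_smul]

theorem det_smul_one_add_sum_vecMulVec_fin_two {c : K} (hc : c ≠ 0) (x : ι → Fin 2 → K) :
    (c • 1 + ∑ i, vecMulVec (x i) (x i)).det =
      (c • 1 : Matrix (Fin 2) (Fin 2) K).det *
          (1 + ∑ i, x i ⬝ᵥ (c • 1 : Matrix (Fin 2) (Fin 2) K)⁻¹ *ᵥ x i) +
        (∑ i, vecMulVec (x i) (x i)).det := by
  rw [det_smul_one_add_fin_two, sum_dotProduct_inv_smul_one_mulVec hc, det_smul, det_one,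
    Fintype.card_fin]
  field_simp

end Matrix

theorem stmt10 :
    ∃ (V : Matrix (Fin 2) (Fin 2) ℝ) (x : Fin 3 → Fin 2 → ℝ),
      V.PosDef ∧
      (V + ∑ i, vecMulVec (x i) (x i)).det ≠
        V.det * (1 + ∑ i, x i ⬝ᵥ V⁻¹.mulVec (x i)) ∧
      V = (6/5 : ℝ) • (1 : Matrix (Fin 2) (Fin 2) ℝ) ∧
      x 0 = ![0.3, 0.7] ∧ x 1 = ![0.6, 0.1] ∧ x 2 = ![0.1, 0.5] ∧
      (V + ∑ i, vecMulVec (x i) (x i)).det = 3.1346 ∧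
      V.det * (1 + ∑ i, x i ⬝ᵥ V⁻¹.mulVec (x i)) = 2.892 := by
  have hc : (6/5 : ℝ) ≠ 0 := by norm_num
  set x : Fin 3 → Fin 2 → ℝ := ![![0.3, 0.7], ![0.6, 0.1], ![0.1, 0.5]]
  have hA : ∑ i, vecMulVec (x i) (x i) = !![0.46, 0.32; 0.32, 0.75] := by
    ext i j
    fin_cases i <;> fin_cases j <;> simp [x, Fin.sum_univ_three] <;> norm_num
  have hrhs : ((6/5 : ℝ) • 1 : Matrix (Fin 2) (Fin 2) ℝ).det *
      (1 + ∑ i, x i ⬝ᵥ ((6/5 : ℝ) • 1 : Matrix (Fin 2) (Fin 2) ℝ)⁻¹ *ᵥ x i) = 2.892 := by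
    rw [det_smul, det_one, sum_dotProduct_inv_smul_one_mulVec hc, hA, trace_fin_two_of]
    norm_num
  have hlhs : ((6/5 : ℝ) • 1 + ∑ i, vecMulVec (x i) (x i)).det = 3.1346 := by
    rw [det_smul_one_add_sum_vecMulVec_fin_two hc, hrhs, hA, det_fin_two_of]
    norm_num
  exact ⟨_, x, PosDef.one.smul (by norm_num), by rw [hlhs, hrhs]; norm_num,
    rfl, rfl, rfl, rfl, hlhs, hrhs⟩
end
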